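/- Define the sequence of scales L_0 = 100 and L_{k+1} = L_k³. For all constants c > 0 and β > 0 there exists k₁ ∈ ℕ such that for every k ≥ k₁ the following holds: if p, q ≥ 0 satisfy p ≤ e^{−(log L_k)^{5/4}} and q ≤ c·L_{k+1}^{28}·(p⁴ + e^{−β·L_k^{1/8}}), then q ≤ e^{−(log L_{k+1})^{5/4}}. -/

import Mathlib

/-!
Write `a = log L_k`, so that `log L_{k+1} = 3a`, `L_{k+1}^{28} = e^{84a}` and `L_k^{1/8} = e^{a/8}`.
The hypothesis on `p` gives `p⁴ ≤ e^{-4 a^{5/4}}`, and the target is `e^{-3^{5/4} a^{5/4}}`. Since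
`3^{5/4} < 4`, the gap `(4 - 3^{5/4}) a^{5/4}` eventually absorbs `84a + log (2c)`, and `β e^{a/8}`
eventually absorbs `84a + log (2c) + 3^{5/4} a^{5/4}`; then each of the two summands contributes at
most half of the target. As `a = 3^k log 100 → ∞`, this holds for all large `k`.
-/

/-- The scales `L₀ = 100`, `L_{k+1} = L_k³`. -/
noncomputable def Lscale : ℕ → ℝ
  | 0 => 100
  | k + 1 => (Lscale k) ^ 3

open Real Filter Asymptotics

lemma Asymptotics.isLittleO_id_rpow_atTop {s : ℝ} (hs : 1 < s) :
    (fun x : ℝ => x) =o[atTop] fun x => x ^ s := by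
  refine (isLittleO_iff_tendsto' ?_).2 ?_
  · filter_upwards [eventually_gt_atTop 0] with x hx hxs
    exact absurd hxs (rpow_pos_of_pos hx s).ne'
  · refine (tendsto_rpow_neg_atTop (sub_pos.2 hs)).congr' ?_
    filter_upwards [eventually_gt_atTop 0] with x hx
    rw [neg_sub, rpow_sub hx, rpow_one]

lemma Asymptotics.IsLittleO.eventually_le_mul {α : Type*} {l : Filter α} {f g : α → ℝ}
    (h : f =o[l] g) (hg : ∀ᶠ x in l, 0 ≤ g x) {ε : ℝ} (hε : 0 < ε) :
    ∀ᶠ x in l, f x ≤ ε * g x := by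
  filter_upwards [h.def hε, hg] with x hfx hgx
  rw [norm_of_nonneg hgx] at hfx
  exact (le_norm_self _).trans hfx

lemma eventually_add_mul_add_mul_rpow_le (C D : ℝ) {s t u : ℝ} (hs : 1 < s) (htu : t < u) :
    ∀ᶠ a in atTop, C + D * a + t * a ^ s ≤ u * a ^ s := by
  have hlin : (fun a : ℝ => C + D * a) =o[atTop] fun a => a ^ s :=
    (isLittleO_const_left.2 <| .inr <|
        tendsto_norm_atTop_atTop.comp (tendsto_rpow_atTop (by linarith))).add
      ((isLittleO_id_rpow_atTop hs).const_mul_left D)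
  filter_upwards [hlin.eventually_le_mul ((eventually_ge_atTop 0).mono fun a ha => rpow_nonneg ha s)
    (sub_pos.2 htu)] with a ha
  linarith

lemma eventually_add_mul_add_mul_rpow_le_mul_exp (C D t s : ℝ) {β b : ℝ} (hβ : 0 < β)
    (hb : 0 < b) : ∀ᶠ a in atTop, C + D * a + t * a ^ s ≤ β * exp (b * a) := by
  have hconst : (fun _ : ℝ => C) =o[atTop] fun a => exp (b * a) :=
    isLittleO_const_left.2 <| .inr <| tendsto_norm_atTop_atTop.comp <|
      tendsto_exp_atTop.comp (tendsto_id.const_mul_atTop hb)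
  have hid : (fun a : ℝ => a) =o[atTop] fun a => exp (b * a) := by
    simpa using isLittleO_pow_exp_pos_mul_atTop 1 hb
  exact (hconst.add (hid.const_mul_left D)).add
    ((isLittleO_rpow_exp_pos_mul_atTop s hb).const_mul_left t) |>.eventually_le_mul
      (.of_forall fun a => (exp_pos _).le) hβ

lemma mul_exp_mul_add_exp_neg_le {c u t X Y : ℝ} (hc : 0 < c)
    (hX : log (2 * c) + u + t ≤ X) (hY : log (2 * c) + u + t ≤ Y) :
    c * exp u * (exp (-X) + exp (-Y)) ≤ exp (-t) := by
  have half : ∀ Z, log (2 * c) + u + t ≤ Z → c * exp u * exp (-Z) ≤ exp (-t) / 2 := by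
    intro Z hZ
    have : 2 * c * exp u * exp (-Z) ≤ exp (-t) := by
      rw [← exp_log (by positivity : 0 < 2 * c), ← exp_add, ← exp_add]
      exact exp_le_exp.2 (by linarith)
    linarith
  calc c * exp u * (exp (-X) + exp (-Y)) = c * exp u * exp (-X) + c * exp u * exp (-Y) :=
        mul_add _ _ _
    _ ≤ exp (-t) / 2 + exp (-t) / 2 := add_le_add (half X hX) (half Y hY)
    _ = exp (-t) := add_halves _

lemma three_rpow_five_div_four_lt_four : (3 : ℝ) ^ ((5 : ℝ) / 4) < 4 := by
  have h : ((3 : ℝ) ^ ((5 : ℝ) / 4)) ^ 4 = 243 := by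
    rw [← rpow_natCast, ← rpow_mul (by norm_num)]
    norm_num
  exact lt_of_pow_lt_pow_left₀ 4 (by norm_num) (by rw [h]; norm_num)

lemma Lscale_pos (k : ℕ) : 0 < Lscale k := by
  induction k with
  | zero => norm_num [Lscale]
  | succ k ih => rw [Lscale]; positivity

lemma log_Lscale_succ (k : ℕ) : log (Lscale (k + 1)) = 3 * log (Lscale k) := by
  rw [Lscale, log_pow]
  norm_num

lemma tendsto_log_Lscale : Tendsto (fun k => log (Lscale k)) atTop atTop := by
  have h : ∀ k, log (Lscale k) = 3 ^ k * log 100 := by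
    intro k
    induction k with
    | zero => simp [Lscale]
    | succ k ih => rw [log_Lscale_succ, ih, pow_succ]; ring
  simp only [h]
  exact (tendsto_pow_atTop_atTop_of_one_lt (by norm_num)).atTop_mul_const (log_pos (by norm_num))

/-- recursion step for the renormalisation probabilities.  For all
`c, β > 0` there is `k₁` such that for `k ≥ k₁`: if `p ≤ e^{−(log L_k)^{5/4}}` and
`q ≤ c·L_{k+1}^{28}·(p⁴ + e^{−β·L_k^{1/8}})`, then `q ≤ e^{−(log L_{k+1})^{5/4}}`. -/
theorem renormalisation_recursion
    (c β : ℝ) (hc : 0 < c) (hβ : 0 < β) :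
    ∃ k₁ : ℕ, ∀ k : ℕ, k₁ ≤ k → ∀ p q : ℝ, 0 ≤ p → 0 ≤ q →
      p ≤ Real.exp (-(Real.log (Lscale k)) ^ ((5 : ℝ) / 4)) →
      q ≤ c * (Lscale (k + 1)) ^ (28 : ℕ) *
            (p ^ 4 + Real.exp (-β * (Lscale k) ^ ((1 : ℝ) / 8))) →
      q ≤ Real.exp (-(Real.log (Lscale (k + 1))) ^ ((5 : ℝ) / 4)) := by
  have hlarge := (eventually_ge_atTop 0).and <|
    (eventually_add_mul_add_mul_rpow_le (log (2 * c)) 84 (by norm_num : (1 : ℝ) < 5 / 4)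
      three_rpow_five_div_four_lt_four).and <|
    eventually_add_mul_add_mul_rpow_le_mul_exp (log (2 * c)) 84 (3 ^ ((5 : ℝ) / 4)) (5 / 4) hβ
      (by norm_num : (0 : ℝ) < 1 / 8)
  obtain ⟨k₁, hk₁⟩ := eventually_atTop.1 (tendsto_log_Lscale.eventually hlarge)
  refine ⟨k₁, fun k hk p q hp _ hpk hqk => ?_⟩
  obtain ⟨ha, hX, hY⟩ := hk₁ k hk
  set a := log (Lscale k)
  have hL : Lscale k = exp a := (exp_log (Lscale_pos k)).symm
  have hp4 : p ^ 4 ≤ exp (-(4 * a ^ ((5 : ℝ) / 4))) := by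
    calc p ^ 4 ≤ exp (-a ^ ((5 : ℝ) / 4)) ^ 4 := pow_le_pow_left₀ hp hpk 4
      _ = _ := by rw [← exp_nat_mul]; ring_nf
  calc q ≤ _ := hqk
    _ ≤ c * exp (84 * a) * (exp (-(4 * a ^ ((5 : ℝ) / 4))) + exp (-(β * exp (1 / 8 * a)))) := by
        rw [Lscale, hL, ← pow_mul, ← exp_nat_mul, rpow_def_of_pos (exp_pos a), log_exp, neg_mul,
          mul_comm a]
        norm_num only
        gcongr
    _ ≤ exp (-(3 ^ ((5 : ℝ) / 4) * a ^ ((5 : ℝ) / 4))) :=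
        mul_exp_mul_add_exp_neg_le hc (by linarith) (by linarith)
    _ = _ := by rw [log_Lscale_succ, mul_rpow (by norm_num) ha]
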